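/- For a standard Gaussian random variable N and n ≥ 2, E[(H_n(N)/√(n!))⁴] ≠ 3. -/

import Mathlib

open MeasureTheory ProbabilityTheory Polynomial Real
open scoped ENNReal NNReal

noncomputable def herQ (k : ℕ) : ℝ[X] := (hermite k).map (Int.castRingHom ℝ)

lemma herQ_succ (k : ℕ) : herQ (k+1) = X * herQ k - derivative (herQ k) := by
  rw [herQ, hermite_succ]; simp [Polynomial.derivative_map, herQ]

lemma herQ_monic (k : ℕ) : (herQ k).Monic := (hermite_monic k).map _

lemma herQ_natDegree (k : ℕ) : (herQ k).natDegree = k := by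
  simp [herQ, (hermite_monic k).natDegree_map, natDegree_hermite]

lemma aeval_eq_herQ (k : ℕ) (x : ℝ) : aeval x (hermite k) = (herQ k).eval x := by
  simp [herQ, aeval_def, eval₂_eq_eval_map]

lemma hasDerivAt_herQ_gauss (k : ℕ) (x : ℝ) :
    HasDerivAt (fun y => (herQ k).eval y * Real.exp (-(y^2/2)))
      (-((herQ (k+1)).eval x * Real.exp (-(x^2/2)))) x := by
  have h1 : HasDerivAt (fun y : ℝ => (herQ k).eval y) ((derivative (herQ k)).eval x) x :=
    (herQ k).hasDerivAt x
  have h2 : HasDerivAt (fun y : ℝ => Real.exp (-(y^2/2))) (-x * Real.exp (-(x^2/2))) x := by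
    have : HasDerivAt (fun y : ℝ => -(y^2/2)) (-x) x := by
      simpa using ((hasDerivAt_pow 2 x).div_const 2).fun_neg
    simpa [mul_comm] using this.exp
  have := h1.fun_mul h2
  refine this.congr_deriv ?_
  rw [herQ_succ]
  simp [eval_mul, eval_sub]
  ring

lemma integrable_gauss : Integrable (fun x : ℝ => Real.exp (-(x^2/2))) := by
  have := integrable_exp_neg_mul_sq (b := (1:ℝ)/2) (by norm_num)
  convert this using 2 with x
  ring_nf

lemma integrable_gauss_shift (a : ℝ) :
    Integrable (fun x : ℝ => Real.exp (-((x - a)^2/2))) :=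
  integrable_gauss.comp_sub_right a

lemma integrable_pow_gauss (i : ℕ) :
    Integrable (fun x : ℝ => x ^ i * Real.exp (-(x^2/2))) := by
  have hg : Integrable (fun x : ℝ =>
      (i.factorial * Real.exp 1) * (Real.exp (-((x - 1)^2/2)) + Real.exp (-((x + 1)^2/2)))) := by
    have h2 : Integrable (fun x : ℝ => Real.exp (-((x + 1)^2/2))) := by
      simpa [sub_neg_eq_add] using integrable_gauss_shift (-1)
    exact ((integrable_gauss_shift 1).add h2).const_mul _
  refine hg.mono' ?_ ?_
  · exact (Continuous.mul (continuous_pow i) (by continuity)).aestronglyMeasurable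
  filter_upwards with x
  have hfacpos : (0:ℝ) < i.factorial := by positivity
  have hfac : |x| ^ i ≤ i.factorial * Real.exp |x| := by
    have h := Real.pow_div_factorial_le_exp _ (abs_nonneg x) i
    rw [div_le_iff₀ hfacpos] at h
    linarith [h]
  have key : |x| ^ i * Real.exp (-(x^2/2)) ≤
      (i.factorial * Real.exp 1) * (Real.exp (-((x - 1)^2/2)) + Real.exp (-((x + 1)^2/2))) := by
    have h1 : |x| ^ i * Real.exp (-(x^2/2)) ≤ i.factorial * Real.exp (|x| - x^2/2) := by
      rw [Real.exp_sub]
      calc |x| ^ i * Real.exp (-(x^2/2)) ≤ (i.factorial * Real.exp |x|) * Real.exp (-(x^2/2)) := by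
            apply mul_le_mul_of_nonneg_right hfac (Real.exp_nonneg _)
        _ = i.factorial * (Real.exp |x| * Real.exp (-(x^2/2))) := by ring
        _ = i.factorial * (Real.exp |x| / Real.exp (x^2/2)) := by
            rw [Real.exp_neg]; ring
    have h2 : Real.exp (|x| - x^2/2) ≤
        Real.exp 1 * (Real.exp (-((x - 1)^2/2)) + Real.exp (-((x + 1)^2/2))) := by
      rcases le_or_gt 0 x with hx | hx
      · rw [abs_of_nonneg hx]
        have e1 : x - x^2/2 = 1/2 + -((x-1)^2/2) := by ring
        rw [e1, Real.exp_add]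
        have h12 : Real.exp (1/2) ≤ Real.exp 1 := Real.exp_le_exp.mpr (by norm_num)
        calc Real.exp (1/2) * Real.exp (-((x-1)^2/2)) ≤ Real.exp 1 * Real.exp (-((x-1)^2/2)) :=
              mul_le_mul_of_nonneg_right h12 (Real.exp_nonneg _)
          _ ≤ Real.exp 1 * (Real.exp (-((x-1)^2/2)) + Real.exp (-((x+1)^2/2))) :=
              mul_le_mul_of_nonneg_left (le_add_of_nonneg_right (Real.exp_nonneg _)) (Real.exp_nonneg 1)
      · rw [abs_of_neg hx]
        have e1 : -x - x^2/2 = 1/2 + -((x+1)^2/2) := by ring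
        rw [e1, Real.exp_add]
        have h12 : Real.exp (1/2) ≤ Real.exp 1 := Real.exp_le_exp.mpr (by norm_num)
        calc Real.exp (1/2) * Real.exp (-((x+1)^2/2)) ≤ Real.exp 1 * Real.exp (-((x+1)^2/2)) :=
              mul_le_mul_of_nonneg_right h12 (Real.exp_nonneg _)
          _ ≤ Real.exp 1 * (Real.exp (-((x-1)^2/2)) + Real.exp (-((x+1)^2/2))) :=
              mul_le_mul_of_nonneg_left (le_add_of_nonneg_left (Real.exp_nonneg _)) (Real.exp_nonneg 1)
    calc |x| ^ i * Real.exp (-(x^2/2)) ≤ i.factorial * Real.exp (|x| - x^2/2) := h1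
      _ ≤ i.factorial * (Real.exp 1 * (Real.exp (-((x - 1)^2/2)) + Real.exp (-((x + 1)^2/2)))) :=
          mul_le_mul_of_nonneg_left h2 (le_of_lt hfacpos)
      _ = _ := by ring
  calc ‖x ^ i * Real.exp (-(x^2/2))‖ = |x| ^ i * Real.exp (-(x^2/2)) := by
        rw [norm_mul, norm_pow]
        simp [Real.norm_eq_abs, abs_of_nonneg (Real.exp_nonneg _)]
    _ ≤ _ := key

lemma integrable_poly_gauss (P : ℝ[X]) :
    Integrable (fun x : ℝ => P.eval x * Real.exp (-(x^2/2))) := by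
  have : (fun x : ℝ => P.eval x * Real.exp (-(x^2/2))) =
      fun x => ∑ i ∈ Finset.range (P.natDegree + 1),
        P.coeff i * (x ^ i * Real.exp (-(x^2/2))) := by
    funext x
    rw [Polynomial.eval_eq_sum_range, Finset.sum_mul]
    simp [mul_assoc]
  rw [this]
  exact integrable_finset_sum _ (fun i _ => (integrable_pow_gauss i).const_mul _)

lemma ibp_step (P : ℝ[X]) (k : ℕ) :
    ∫ x : ℝ, (P * herQ (k+1)).eval x * Real.exp (-(x^2/2)) =
    ∫ x : ℝ, ((derivative P) * herQ k).eval x * Real.exp (-(x^2/2)) := by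
  have key := integral_mul_deriv_eq_deriv_mul_of_integrable
    (u := fun x : ℝ => P.eval x) (u' := fun x => (derivative P).eval x)
    (v := fun x : ℝ => -((herQ k).eval x * Real.exp (-(x^2/2))))
    (v' := fun x : ℝ => (herQ (k+1)).eval x * Real.exp (-(x^2/2)))
    (fun x _ => P.hasDerivAt x)
    (fun x _ => by simpa using (hasDerivAt_herQ_gauss k x).fun_neg)
    (by simpa only [Pi.mul_def, eval_mul, mul_assoc] using integrable_poly_gauss (P * herQ (k+1)))
    (by
      have := (integrable_poly_gauss ((derivative P) * herQ k)).fun_neg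
      simpa only [Pi.mul_def, eval_mul, mul_assoc, neg_mul, mul_neg] using this)
    (by
      have := (integrable_poly_gauss (P * herQ k)).fun_neg
      simpa only [Pi.mul_def, eval_mul, mul_assoc, neg_mul, mul_neg] using this)
  simp only [eval_mul, mul_assoc]
  rw [key]
  rw [← integral_neg]
  congr 1 with x
  ring

lemma ibp_iterate (k : ℕ) : ∀ P : ℝ[X],
    ∫ x : ℝ, (P * herQ k).eval x * Real.exp (-(x^2/2)) =
    ∫ x : ℝ, (derivative^[k] P).eval x * Real.exp (-(x^2/2)) := by
  induction k with
  | zero =>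
    intro P
    simp [herQ, hermite_zero]
  | succ k ih =>
    intro P
    rw [ibp_step P k, ih (derivative P), Function.iterate_succ_apply]

lemma iterate_derivative_of_monic {P : ℝ[X]} {k : ℕ} (h1 : P.natDegree = k) (h2 : P.Monic) :
    derivative^[k] P = C (k.factorial : ℝ) := by
  have hdeg : (derivative^[k] P).natDegree = 0 := by
    have := Polynomial.natDegree_iterate_derivative P k
    omega
  have := Polynomial.eq_C_of_natDegree_le_zero hdeg.le
  rw [this, Polynomial.coeff_iterate_derivative]
  have : P.coeff (0 + k) = 1 := by
    simpa [h1] using h2.coeff_natDegree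
  rw [this]
  simp [Nat.descFactorial_self, nsmul_eq_mul]

lemma four_fact_le (n : ℕ) (hn : 2 ≤ n) : 4 * (n.factorial)^2 ≤ (2*n).factorial := by
  induction n with
  | zero => omega
  | succ m ih =>
    rcases Nat.lt_or_ge m 2 with hm | hm
    · interval_cases m
      · omega
      · norm_num [Nat.factorial]
    · have h1 := ih hm
      rw [show 2 * (m+1) = 2*m+1+1 from by ring, Nat.factorial_succ, Nat.factorial_succ,
        Nat.factorial_succ]
      calc 4 * ((m+1) * m.factorial)^2 = (m+1)*(m+1)*(4 * m.factorial^2) := by ring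
        _ ≤ (m+1)*(m+1)*(2*m).factorial := Nat.mul_le_mul_left _ h1
        _ ≤ ((2*m+1+1) * (2*m+1)) * (2*m).factorial := by
            have h : (m+1)*(m+1) ≤ (2*m+1+1)*(2*m+1) := by nlinarith
            exact Nat.mul_le_mul_right _ h
        _ = (2*m+1+1) * ((2*m+1) * (2*m).factorial) := by ring

lemma gaussianPDFReal_zero_one (x : ℝ) :
    gaussianPDFReal 0 1 x = (Real.sqrt (2 * π))⁻¹ * Real.exp (-(x^2/2)) := by
  rw [gaussianPDFReal]
  push_cast
  norm_num [neg_div]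

lemma integral_gaussianReal_eq (g : ℝ → ℝ) :
    ∫ x, g x ∂(gaussianReal 0 1) =
      ∫ x, gaussianPDFReal 0 1 x * g x := by
  rw [gaussianReal_of_var_ne_zero 0 one_ne_zero]
  have hmeas : Measurable (fun x => (gaussianPDFReal 0 1 x).toNNReal) :=
    (measurable_gaussianPDFReal 0 1).real_toNNReal
  have he : (gaussianPDF 0 1) = fun x => (((gaussianPDFReal 0 1 x).toNNReal : ℝ≥0) : ℝ≥0∞) := by
    funext x; simp [gaussianPDF, ENNReal.ofReal]
  rw [he, integral_withDensity_eq_integral_smul hmeas]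
  congr 1 with x
  simp [NNReal.smul_def, Real.coe_toNNReal _ (gaussianPDFReal_nonneg 0 1 x)]

lemma gauss_value : ∫ x : ℝ, Real.exp (-(x^2/2)) = Real.sqrt (2 * π) := by
  have h := integral_gaussian ((1:ℝ)/2)
  rw [show π / ((1:ℝ)/2) = 2 * π by ring] at h
  rw [← h]
  congr 1 with x
  ring_nf

/-- For `n ≥ 2` and `N` standard Gaussian, `E[(H_n(N)/√(n!))⁴] ≠ 3`. -/
theorem stmt_5 (n : ℕ) (hn : 2 ≤ n) :
    (∫ x, ((aeval x (hermite n)) / Real.sqrt (Nat.factorial n)) ^ 4 ∂(gaussianReal 0 1)) ≠ 3 := by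
  set A : ℝ[X] := (herQ n)^2 with hA
  set B : ℝ[X] := herQ (2*n) with hB
  set s : ℝ := Real.sqrt (2 * π) with hs
  have hπ : (0:ℝ) < 2 * π := by positivity
  have hs_pos : 0 < s := Real.sqrt_pos.mpr hπ
  -- values of cross terms
  have hAmono : A.Monic := (herQ_monic n).pow 2
  have hAdeg : A.natDegree = 2*n := by rw [hA, natDegree_pow, herQ_natDegree]
  have hABval : ∫ x : ℝ, (A * B).eval x * Real.exp (-(x^2/2)) = (2*n).factorial * s := by
    rw [hB, ibp_iterate (2*n) A, iterate_derivative_of_monic hAdeg hAmono]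
    simp only [eval_C]
    rw [integral_const_mul, gauss_value]
  have hBBval : ∫ x : ℝ, (B * B).eval x * Real.exp (-(x^2/2)) = (2*n).factorial * s := by
    rw [show (B*B : ℝ[X]) = B * herQ (2*n) from by rw [hB],
      ibp_iterate (2*n) B,
      iterate_derivative_of_monic (by rw [hB, herQ_natDegree]) (hB ▸ herQ_monic (2*n))]
    simp only [eval_C]
    rw [integral_const_mul, gauss_value]
  -- nonnegativity of the square
  have hnn : 0 ≤ ∫ x : ℝ, ((A - B)^2).eval x * Real.exp (-(x^2/2)) := by
    apply integral_nonneg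
    intro x
    simp only [eval_pow]
    positivity
  -- expansion
  have hexp : ∫ x : ℝ, (A * A).eval x * Real.exp (-(x^2/2)) =
      (∫ x : ℝ, ((A - B)^2).eval x * Real.exp (-(x^2/2))) +
      (2 * (∫ x : ℝ, (A * B).eval x * Real.exp (-(x^2/2))) -
        ∫ x : ℝ, (B * B).eval x * Real.exp (-(x^2/2))) := by
    have funeq : (fun x : ℝ => (A * A).eval x * Real.exp (-(x^2/2))) =
        fun x => ((A - B)^2).eval x * Real.exp (-(x^2/2)) +
          (2 * ((A * B).eval x * Real.exp (-(x^2/2))) - (B * B).eval x * Real.exp (-(x^2/2))) := by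
      funext x
      simp only [eval_mul, eval_sub, eval_pow]
      ring
    have hI2 : Integrable (fun x : ℝ => 2 * ((A * B).eval x * Real.exp (-(x^2/2))) -
        (B * B).eval x * Real.exp (-(x^2/2))) := by
      exact ((integrable_poly_gauss (A * B)).const_mul 2).sub (integrable_poly_gauss (B * B))
    rw [funeq, integral_add (integrable_poly_gauss ((A - B)^2)) hI2,
      integral_sub ((integrable_poly_gauss (A * B)).const_mul 2) (integrable_poly_gauss (B * B)),
      integral_const_mul]
  have hAAge : (2*n).factorial * s ≤ ∫ x : ℝ, (A * A).eval x * Real.exp (-(x^2/2)) := by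
    rw [hexp, hABval, hBBval]
    linarith
  -- move to the Gaussian measure
  have hconv : ∫ x, ((herQ n).eval x)^4 ∂(gaussianReal 0 1) =
      s⁻¹ * ∫ x : ℝ, (A * A).eval x * Real.exp (-(x^2/2)) := by
    rw [integral_gaussianReal_eq]
    rw [← integral_const_mul]
    congr 1 with x
    rw [gaussianPDFReal_zero_one]
    simp only [hA, eval_mul, eval_pow]
    ring
  have hintge : ((2*n).factorial : ℝ) ≤ ∫ x, ((herQ n).eval x)^4 ∂(gaussianReal 0 1) := by
    rw [hconv]
    calc ((2*n).factorial : ℝ) = s⁻¹ * ((2*n).factorial * s) := by field_simp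
      _ ≤ _ := mul_le_mul_of_nonneg_left hAAge (le_of_lt (inv_pos.mpr hs_pos))
  -- rewrite target integrand
  have hfacpos : (0:ℝ) < (n.factorial : ℝ)^2 := by positivity
  have htgt : (∫ x, ((aeval x (hermite n)) / Real.sqrt (Nat.factorial n)) ^ 4 ∂(gaussianReal 0 1))
      = (∫ x, ((herQ n).eval x)^4 ∂(gaussianReal 0 1)) / (n.factorial : ℝ)^2 := by
    rw [← integral_div]
    congr 1 with x
    rw [aeval_eq_herQ, div_pow]
    congr 1
    have h4 : Real.sqrt (n.factorial : ℝ) ^ 4 = ((Real.sqrt (n.factorial : ℝ)) ^ 2) ^ 2 := by ring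
    rw [h4, Real.sq_sqrt (by positivity)]
  rw [htgt]
  have hfle : (4:ℝ) * (n.factorial : ℝ)^2 ≤ ((2*n).factorial : ℝ) := by
    exact_mod_cast four_fact_le n hn
  apply ne_of_gt
  rw [lt_div_iff₀ hfacpos]
  calc (3:ℝ) * (n.factorial : ℝ)^2 < 4 * (n.factorial : ℝ)^2 := by linarith
    _ ≤ ((2*n).factorial : ℝ) := hfle
    _ ≤ _ := hintge
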